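/- arXiv:1410.6734 — 2 statements merged into one kernel-verified Lean document; each statement's English description precedes it below -/
import Mathlib

section
/- Let 0 < δ ≤ γ < √n and e ∈ ℝ^n with ‖e‖ = √n. If s̄ ∈ K_e(γ) with s̄ ≠ 0, and θ denotes the angle between s̄ and e (so cos θ ≥ γ/√n), then the Euclidean distance from s̄ to the boundary of K_e(δ) is at least ‖s̄‖·(√(1 − δ²/n)·cos θ − (δ/√n)·sin θ). -/
/-!
Put `u = e / √n` and `c = δ / √n = cos β`, and split `x = ⟪u, x⟫ u + x⊥`. The margin
`√(1 - c²) ⟪u, x⟫ - c ‖x⊥‖ = ‖x‖ sin (β - ∠(u, x))` is 1-Lipschitz, since `x ↦ (⟪u, x⟫, ‖x⊥‖)`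
is 1-Lipschitz into the Euclidean plane and `(√(1 - c²), -c)` is a unit vector; and it is
nonpositive wherever `⟪u, x⟫ ≤ c ‖x‖`, in particular on the frontier of the cone `K_e(δ)`.
So it bounds the distance to that frontier from below.
-/

open Metric InnerProductGeometry
open scoped RealInnerProductSpace

section Cone

variable {V : Type*} [NormedAddCommGroup V] [InnerProductSpace ℝ V] {u : V} {c : ℝ}

noncomputable def coneMargin (u : V) (c : ℝ) (x : V) : ℝ :=
  √(1 - c ^ 2) * ⟪u, x⟫ - c * ‖x - ⟪u, x⟫ • u‖

lemma inner_sq_add_norm_sub_inner_smul_sq (hu : ‖u‖ = 1) (x : V) :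
    ⟪u, x⟫ ^ 2 + ‖x - ⟪u, x⟫ • u‖ ^ 2 = ‖x‖ ^ 2 := by
  have horth : inner ℝ (⟪u, x⟫ • u) (x - ⟪u, x⟫ • u) = 0 := by
    rw [real_inner_smul_left, inner_sub_right, real_inner_smul_right,
      real_inner_self_eq_norm_sq, hu]
    ring
  have := norm_add_sq_eq_norm_sq_add_norm_sq_real horth
  rw [add_sub_cancel, norm_smul, hu, mul_one, Real.norm_eq_abs, abs_mul_abs_self] at this
  linear_combination -this

lemma coneMargin_eq_norm_mul (hu : ‖u‖ = 1) (c : ℝ) (x : V) :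
    coneMargin u c x = ‖x‖ * (√(1 - c ^ 2) * Real.cos (angle u x) - c * Real.sin (angle u x)) := by
  have hcos : ⟪u, x⟫ = ‖x‖ * Real.cos (angle u x) := by
    rw [← cos_angle_mul_norm_mul_norm, hu]
    ring
  have hsin : ‖x - ⟪u, x⟫ • u‖ = ‖x‖ * Real.sin (angle u x) := by
    rw [← Real.sqrt_sq (norm_nonneg _), ← mul_comm, ← one_mul ‖x‖, ← hu,
      sin_angle_mul_norm_mul_norm, real_inner_self_eq_norm_sq, real_inner_self_eq_norm_sq, hu,
      ← inner_sq_add_norm_sub_inner_smul_sq hu x]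
    congr 1
    ring
  rw [coneMargin, hsin, hcos]
  ring

lemma coneMargin_sub_coneMargin_le (hu : ‖u‖ = 1) (hc : c ^ 2 ≤ 1) (x y : V) :
    coneMargin u c x - coneMargin u c y ≤ ‖x - y‖ := by
  set A := ⟪u, x⟫ - ⟪u, y⟫
  set B := ‖x - ⟪u, x⟫ • u‖ - ‖y - ⟪u, y⟫ • u‖
  have hpyth : A ^ 2 + ‖(x - ⟪u, x⟫ • u) - (y - ⟪u, y⟫ • u)‖ ^ 2 = ‖x - y‖ ^ 2 := by
    rw [← inner_sq_add_norm_sub_inner_smul_sq hu (x - y), inner_sub_right, sub_smul]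
    congr 3
    abel
  have hB : B ^ 2 ≤ ‖(x - ⟪u, x⟫ • u) - (y - ⟪u, y⟫ • u)‖ ^ 2 :=
    sq_le_sq' (neg_le_of_abs_le (abs_norm_sub_norm_le _ _)) (abs_le.1 (abs_norm_sub_norm_le _ _)).2
  have hs : √(1 - c ^ 2) ^ 2 = 1 - c ^ 2 := Real.sq_sqrt (by linarith)
  have hdiff : coneMargin u c x - coneMargin u c y = √(1 - c ^ 2) * A - c * B := by
    simp only [coneMargin, A, B]
    ring
  rw [hdiff]
  -- Cauchy–Schwarz in the plane, for the unit vector `(√(1 - c²), -c)`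
  refine le_of_sq_le_sq ?_ (norm_nonneg _)
  nlinarith [sq_nonneg (c * A + √(1 - c ^ 2) * B)]

lemma coneMargin_nonpos (hu : ‖u‖ = 1) (hc0 : 0 ≤ c) (hc1 : c ≤ 1) {x : V}
    (hx : ⟪u, x⟫ ≤ c * ‖x‖) : coneMargin u c x ≤ 0 := by
  rw [coneMargin, sub_nonpos]
  rcases le_or_gt ⟪u, x⟫ 0 with ha | ha
  · exact (mul_nonpos_of_nonneg_of_nonpos (Real.sqrt_nonneg _) ha).trans (by positivity)
  · refine le_of_sq_le_sq ?_ (by positivity)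
    have hpyth := inner_sq_add_norm_sub_inner_smul_sq hu x
    have hs : √(1 - c ^ 2) ^ 2 = 1 - c ^ 2 := Real.sq_sqrt (by nlinarith)
    have hsq : ⟪u, x⟫ ^ 2 ≤ c ^ 2 * ‖x‖ ^ 2 := by
      rw [← mul_pow]
      exact pow_le_pow_left₀ ha.le hx 2
    rw [mul_pow, mul_pow, hs]
    nlinarith

lemma frontier_setOf_le_inner_subset (u : V) (c : ℝ) :
    frontier {x : V | c * ‖x‖ ≤ ⟪u, x⟫} ⊆ {x | ⟪u, x⟫ ≤ c * ‖x‖} :=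
  fun _ hx => (frontier_le_subset_eq (continuous_const.mul continuous_norm)
    (continuous_const.inner continuous_id) hx).ge

theorem coneMargin_le_infDist_frontier (hu : ‖u‖ = 1) (hc0 : 0 ≤ c) (hc1 : c ≤ 1) (s : V) :
    coneMargin u c s ≤ infDist s (frontier {x : V | c * ‖x‖ ≤ ⟪u, x⟫}) := by
  have hne : (frontier {x : V | c * ‖x‖ ≤ ⟪u, x⟫}).Nonempty := by
    refine nonempty_frontier_iff.2 ⟨⟨u, ?_⟩, fun h => ?_⟩
    · simp [hu, hc1]
    · have : -u ∈ {x : V | c * ‖x‖ ≤ ⟪u, x⟫} := h ▸ Set.mem_univ _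
      simp [hu] at this
      linarith
  refine (le_infDist hne).2 fun y hy => ?_
  calc coneMargin u c s ≤ coneMargin u c s - coneMargin u c y :=
        (le_sub_self_iff _).2 (coneMargin_nonpos hu hc0 hc1 (frontier_setOf_le_inner_subset u c hy))
    _ ≤ ‖s - y‖ := coneMargin_sub_coneMargin_le hu (by nlinarith) s y
    _ = dist s y := (dist_eq_norm s y).symm

end Cone

theorem stmt_5_general (n : ℕ) (e : EuclideanSpace ℝ (Fin n))
    (he : ‖e‖ = Real.sqrt n) (δ γ : ℝ)
    (hδ0 : 0 < δ) (hδγ : δ ≤ γ) (hγn : γ < Real.sqrt n)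
    (sbar : EuclideanSpace ℝ (Fin n))
    (θ : ℝ) (hθ : θ = Real.arccos ((inner ℝ e sbar : ℝ) / (Real.sqrt n * ‖sbar‖))) :
    Metric.infDist sbar
        (frontier {x : EuclideanSpace ℝ (Fin n) | (inner ℝ e x : ℝ) ≥ δ * ‖x‖}) ≥
      ‖sbar‖ * (Real.sqrt (1 - δ ^ 2 / n) * Real.cos θ -
        (δ / Real.sqrt n) * Real.sin θ) := by
  set m := Real.sqrt n
  have hm : 0 < m := by linarith
  have hu : ‖m⁻¹ • e‖ = 1 := by
    rw [norm_smul, he, norm_inv, Real.norm_of_nonneg hm.le, inv_mul_cancel₀ hm.ne']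
  have hcone : {x : EuclideanSpace ℝ (Fin n) | inner ℝ e x ≥ δ * ‖x‖} =
      {x | δ / m * ‖x‖ ≤ ⟪m⁻¹ • e, x⟫} := by
    ext x
    rw [Set.mem_ofPred_eq, Set.mem_ofPred_eq, real_inner_smul_left, div_mul_eq_mul_div,
      div_le_iff₀ hm, inv_mul_eq_div, div_mul_cancel₀ _ hm.ne', ge_iff_le]
  have hangle : θ = angle (m⁻¹ • e) sbar := by
    rw [hθ, angle_smul_left_of_pos _ _ (inv_pos.2 hm), angle, he]
  have hδn : δ ^ 2 / n = (δ / m) ^ 2 := by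
    rw [div_pow, Real.sq_sqrt (Nat.cast_nonneg n)]
  rw [hcone, hangle, hδn, ← coneMargin_eq_norm_mul hu]
  exact coneMargin_le_infDist_frontier hu (div_pos hδ0 hm).le
    ((div_le_one hm).2 (hδγ.trans hγn.le)) sbar

theorem stmt_5 (n : ℕ) (e : EuclideanSpace ℝ (Fin n))
    (he : ‖e‖ = Real.sqrt n) (δ γ : ℝ)
    (hδ0 : 0 < δ) (hδγ : δ ≤ γ) (hγn : γ < Real.sqrt n)
    (sbar : EuclideanSpace ℝ (Fin n)) (hs0 : sbar ≠ 0)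
    (hs : (inner ℝ e sbar : ℝ) ≥ γ * ‖sbar‖)
    (θ : ℝ) (hθ : θ = Real.arccos ((inner ℝ e sbar : ℝ) / (Real.sqrt n * ‖sbar‖))) :
    Metric.infDist sbar
        (frontier {x : EuclideanSpace ℝ (Fin n) | (inner ℝ e x : ℝ) ≥ δ * ‖x‖}) ≥
      ‖sbar‖ * (Real.sqrt (1 - δ ^ 2 / n) * Real.cos θ -
        (δ / Real.sqrt n) * Real.sin θ) :=
  stmt_5_general n e he δ γ hδ0 hδγ hγn sbar θ hθ
end

section
/- Let e ∈ ℝ^n with ‖e‖ = √n, 0 < β ≤ α < √n, and let L ⊆ ℝ^n be a subspace with e ∉ L. Suppose s̄ lies in the interior of K_e(β)* = K_e(√(n−β²)), s̄ ∉ L^⊥, and x̄ minimizes x ↦ s̄ᵀx over (e + L) ∩ K_e(α). Then there exists s̄′ ∈ (s̄ + L^⊥) ∩ K_e(α)* with eᵀ(s̄ − s̄′) ≥ C₁·C₂·‖s̄‖, where C₁ = ( (n−α²)·‖x̄‖²·(1−(β/α)²) / (n−α² + (‖x̄‖−α)²·(1−(β/α)²)) )^{1/2} and C₂ = (1/n)·(α·√(n−β²)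 − β·√(n−α²)). -/
/-!
Complementary slackness for the conic program `min ⟪s̄, x⟫` over `(e + L) ∩ K_e(α)`. If the
cone constraint is inactive at `x̄`, then `s̄ ⊥ L` and `s̄' = 0` works. Otherwise the
constraint's gradient at `x̄` is `w = e - (α / ‖x̄‖) x̄`, and first-order optimality with a
one-constraint Farkas lemma gives `s̄ - l w ∈ Lᗮ` for some `l ≥ 0`; then `s̄' = l w` lies in
`K_e(α)* = K_e(√(n - α²))` and is orthogonal to `x̄`. Either way `⟪e, s̄ - s̄'⟫ = ⟪s̄, x̄⟫`.
Finally `s̄` and `x̄` lie in circular cones around `e`, so the angle between them is at most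
the sum of the two half-apertures, which gives `⟪s̄, x̄⟫ ≥ C₂ ‖s̄‖ ‖x̄‖ ≥ C₁ C₂ ‖s̄‖`.
-/

open RealInnerProductSpace Filter Topology

section

variable {E : Type*} [NormedAddCommGroup E] [InnerProductSpace ℝ E]

/-- The paper's `K_e(γ)`. -/
def circularCone (e : E) (γ : ℝ) : Set E := {x | γ * ‖x‖ ≤ ⟪e, x⟫}

@[simp]
lemma mem_circularCone {e x : E} {γ : ℝ} : x ∈ circularCone e γ ↔ γ * ‖x‖ ≤ ⟪e, x⟫ := Iff.rfl

lemma eq_zero_of_forall_nonneg_mul_add {a b : ℝ} (h : ∀ t, 0 ≤ t * a + b) : a = 0 := by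
  by_contra ha
  have := h (-(b + 1) / a)
  rw [div_mul_cancel₀ _ ha] at this
  linarith

lemma exists_nonneg_sub_smul_mem_orthogonal {K : Submodule ℝ E} {w s : E} (hw : w ∉ Kᗮ)
    (h : ∀ d ∈ K, 0 < ⟪w, d⟫ → 0 ≤ ⟪s, d⟫) : ∃ l : ℝ, 0 ≤ l ∧ s - l • w ∈ Kᗮ := by
  obtain ⟨u, huK, hwu⟩ : ∃ u ∈ K, 0 < ⟪w, u⟫ := by
    obtain ⟨d, hdK, hd⟩ : ∃ d ∈ K, ⟪d, w⟫ ≠ 0 := by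
      simpa [Submodule.mem_orthogonal] using hw
    rcases (real_inner_comm w d ▸ hd).lt_or_gt with hneg | hpos
    · exact ⟨-d, K.neg_mem hdK, by rw [inner_neg_right]; linarith⟩
    · exact ⟨d, hdK, hpos⟩
  have hker : ∀ d ∈ K, ⟪w, d⟫ = 0 → ⟪s, d⟫ = 0 := fun d hdK hd ↦
    eq_zero_of_forall_nonneg_mul_add (b := ⟪s, u⟫) fun t ↦ by
      have := h (t • d + u) (K.add_mem (K.smul_mem t hdK) huK)
        (by rwa [inner_add_right, inner_smul_right, hd, mul_zero, zero_add])
      rwa [inner_add_right, inner_smul_right] at this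
  refine ⟨⟪s, u⟫ / ⟪w, u⟫, div_nonneg (h u huK hwu) hwu.le, fun d hdK ↦ ?_⟩
  have hd' := hker (d - (⟪w, d⟫ / ⟪w, u⟫) • u) (K.sub_mem hdK (K.smul_mem _ huK))
    (by rw [inner_sub_right, inner_smul_right, div_mul_cancel₀ _ hwu.ne', sub_self])
  rw [inner_sub_right, inner_smul_right] at hd'
  rw [real_inner_comm, inner_sub_left, real_inner_smul_left]
  linear_combination hd'

lemma eventually_pos_add_mul {a : ℝ} (b : ℝ) (ha : 0 < a) : ∀ᶠ t in 𝓝 0, 0 < a + t * b := by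
  have : Tendsto (fun t : ℝ ↦ a + t * b) (𝓝 0) (𝓝 (a + 0 * b)) :=
    tendsto_const_nhds.add (tendsto_id.mul_const b)
  rw [zero_mul, add_zero] at this
  exact this.eventually_const_lt ha

lemma mem_interior_circularCone {e x : E} {γ : ℝ} (h : γ * ‖x‖ < ⟪e, x⟫) :
    x ∈ interior (circularCone e γ) :=
  interior_maximal (fun _ hy ↦ le_of_lt hy)
    (isOpen_lt (continuous_const.mul continuous_norm) (continuous_const.inner continuous_id)) h

lemma mem_orthogonal_of_forall_inner_le {L : Submodule ℝ E} {C : Set E} {e s x₀ : E}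
    (hx₀L : x₀ - e ∈ L) (hx₀C : x₀ ∈ interior C)
    (hmin : ∀ x, x - e ∈ L → x ∈ C → ⟪s, x₀⟫ ≤ ⟪s, x⟫) : s ∈ Lᗮ := by
  intro d hd
  have hline : Continuous fun t : ℝ ↦ x₀ + t • d := by fun_prop
  have hlocal : IsLocalMin (fun t : ℝ ↦ ⟪s, x₀⟫ + t * ⟪s, d⟫) 0 := by
    filter_upwards [hline.continuousAt.preimage_mem_nhds
      (by simpa using mem_interior_iff_mem_nhds.mp hx₀C)] with t ht
    have := hmin (x₀ + t • d) (by simpa [add_sub_right_comm] using L.add_mem hx₀L (L.smul_mem t hd))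
      ht
    simpa [inner_add_right, inner_smul_right] using this
  have hderiv := hlocal.hasDerivAt_eq_zero (((hasDerivAt_id 0).mul_const ⟪s, d⟫).const_add ⟪s, x₀⟫)
  rw [real_inner_comm]
  simpa using hderiv

/-- The gradient at `x ≠ 0` of `y ↦ ⟪e, y⟫ - α * ‖y‖`, whose superlevel set at `0` is
`circularCone e α`. -/
noncomputable def coneNormal (e : E) (α : ℝ) (x : E) : E := e - (α / ‖x‖) • x

section coneNormal

variable {e x : E} {α : ℝ}

lemma inner_coneNormal_eq_inner_sub (d : E) :
    ⟪coneNormal e α x, d⟫ = ⟪e, d⟫ - α / ‖x‖ * ⟪x, d⟫ := by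
  rw [coneNormal, inner_sub_left, real_inner_smul_left]

variable (hx : x ≠ 0) (hxe : ⟪e, x⟫ = α * ‖x‖)
include hx hxe

lemma inner_self_coneNormal : ⟪x, coneNormal e α x⟫ = 0 := by
  have : ‖x‖ ≠ 0 := norm_ne_zero_iff.mpr hx
  rw [coneNormal, inner_sub_right, real_inner_smul_right, real_inner_comm, hxe,
    real_inner_self_eq_norm_sq]
  field_simp
  ring

lemma inner_coneNormal : ⟪e, coneNormal e α x⟫ = ‖e‖ ^ 2 - α ^ 2 := by
  have : ‖x‖ ≠ 0 := norm_ne_zero_iff.mpr hx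
  rw [coneNormal, inner_sub_right, real_inner_smul_right, hxe, real_inner_self_eq_norm_sq]
  field_simp

lemma norm_sq_coneNormal : ‖coneNormal e α x‖ ^ 2 = ‖e‖ ^ 2 - α ^ 2 := by
  rw [← real_inner_self_eq_norm_sq, ← inner_coneNormal hx hxe]
  nth_rw 1 [coneNormal]
  rw [inner_sub_left, real_inner_smul_left, inner_self_coneNormal hx hxe, mul_zero, sub_zero]

lemma eventually_add_smul_mem_circularCone (hα : 0 < α) {d : E}
    (hd : 0 < ⟪coneNormal e α x, d⟫) : ∀ᶠ t in 𝓝[>] (0 : ℝ), x + t • d ∈ circularCone e α := by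
  have hr : 0 < ‖x‖ := norm_pos_iff.mpr hx
  set q := ⟪e, d⟫ ^ 2 - α ^ 2 * ‖d‖ ^ 2
  have hsq : ∀ t : ℝ, ⟪e, x + t • d⟫ ^ 2 - (α * ‖x + t • d‖) ^ 2 =
      t * (2 * α * ‖x‖ * ⟪coneNormal e α x, d⟫ + t * q) := by
    intro t
    rw [inner_coneNormal_eq_inner_sub, inner_add_right, real_inner_smul_right, hxe, mul_pow,
      norm_add_sq_real, norm_smul, real_inner_smul_right, Real.norm_eq_abs, mul_pow, sq_abs]
    field_simp
    ring
  have hslope := eventually_pos_add_mul q (mul_pos (mul_pos two_pos (mul_pos hα hr)) hd)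
  have hpos := eventually_pos_add_mul ⟪e, d⟫ (mul_pos hα hr)
  filter_upwards [eventually_nhdsWithin_of_eventually_nhds hslope,
    eventually_nhdsWithin_of_eventually_nhds hpos, self_mem_nhdsWithin]
    with t hslope hpos (ht : 0 < t)
  have hinner : ⟪e, x + t • d⟫ = α * ‖x‖ + t * ⟪e, d⟫ := by
    rw [inner_add_right, real_inner_smul_right, hxe]
  refine (pow_le_pow_iff_left₀ (mul_nonneg hα.le (norm_nonneg _)) (hinner ▸ hpos.le)
    two_ne_zero).mp ?_
  nlinarith [hsq t, mul_pos ht hslope]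

end coneNormal

lemma exists_dual_certificate {L : Submodule ℝ E} {e s x : E} {α : ℝ} (hα : 0 < α)
    (hαe : α < ‖e‖) (hx : x ≠ 0) (hxL : x - e ∈ L) (hxC : x ∈ circularCone e α)
    (hmin : ∀ y, y - e ∈ L → y ∈ circularCone e α → ⟪s, x⟫ ≤ ⟪s, y⟫) :
    ∃ s', s' - s ∈ Lᗮ ∧ s' ∈ circularCone e √(‖e‖ ^ 2 - α ^ 2) ∧ ⟪s', x⟫ = 0 := by
  rcases (mem_circularCone.mp hxC).lt_or_eq with hint | hbd
  · have hsL := mem_orthogonal_of_forall_inner_le hxL (mem_interior_circularCone hint) hmin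
    exact ⟨0, by simpa using Lᗮ.neg_mem hsL, by simp, inner_zero_left x⟩
  replace hbd := hbd.symm
  have hw : coneNormal e α x ∉ Lᗮ := fun hw ↦ by
    have := hw _ hxL
    rw [inner_sub_left, inner_self_coneNormal hx hbd, inner_coneNormal hx hbd] at this
    nlinarith
  have hfirst : ∀ d ∈ L, 0 < ⟪coneNormal e α x, d⟫ → 0 ≤ ⟪s, d⟫ := by
    intro d hd hwd
    obtain ⟨t, hxt, ht⟩ :=
      ((eventually_add_smul_mem_circularCone hx hbd hα hwd).and self_mem_nhdsWithin).exists
    have := hmin (x + t • d) (by simpa [add_sub_right_comm] using L.add_mem hxL (L.smul_mem t hd))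
      hxt
    rw [inner_add_right, real_inner_smul_right, le_add_iff_nonneg_right] at this
    exact (mul_nonneg_iff_of_pos_left ht).mp this
  obtain ⟨l, hl, hsl⟩ := exists_nonneg_sub_smul_mem_orthogonal hw hfirst
  refine ⟨l • coneNormal e α x, by simpa using Lᗮ.neg_mem hsl, ?_,
    by rw [real_inner_smul_left, real_inner_comm, inner_self_coneNormal hx hbd, mul_zero]⟩
  rw [mem_circularCone]
  refine le_of_eq ?_
  rw [norm_smul, Real.norm_of_nonneg hl, real_inner_smul_right, inner_coneNormal hx hbd,
    ← norm_sq_coneNormal hx hbd, Real.sqrt_sq (norm_nonneg _)]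
  ring

lemma inner_sub_eq_inner_of_mem_orthogonal {L : Submodule ℝ E} {e s s' x : E}
    (hxL : x - e ∈ L) (hs' : s' - s ∈ Lᗮ) (hslack : ⟪s', x⟫ = 0) : ⟪e, s - s'⟫ = ⟪s, x⟫ := by
  have := hs' _ hxL
  rw [inner_sub_left, inner_sub_right, inner_sub_right, real_inner_comm s' x, hslack,
    real_inner_comm s x] at this
  rw [inner_sub_right]
  linarith

lemma sq_mul_inner_sub_le (e s x : E) :
    (‖e‖ ^ 2 * ⟪s, x⟫ - ⟪e, s⟫ * ⟪e, x⟫) ^ 2 ≤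
      (‖e‖ ^ 2 * ‖s‖ ^ 2 - ⟪e, s⟫ ^ 2) * (‖e‖ ^ 2 * ‖x‖ ^ 2 - ⟪e, x⟫ ^ 2) := by
  rcases eq_or_ne e 0 with rfl | he
  · simp
  -- Cauchy–Schwarz for the components of `s` and `x` orthogonal to `e`, scaled by `‖e‖²`
  have hcs := real_inner_mul_inner_self_le (‖e‖ ^ 2 • s - ⟪e, s⟫ • e) (‖e‖ ^ 2 • x - ⟪e, x⟫ • e)
  simp only [inner_sub_left, inner_sub_right, real_inner_smul_left, real_inner_smul_right] at hcs
  simp only [real_inner_self_eq_norm_sq, real_inner_comm e] at hcs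
  refine le_of_mul_le_mul_left ?_ (by positivity : 0 < (‖e‖ ^ 2) ^ 2)
  linear_combination hcs

lemma sq_norm_mul_sub_sq_inner_le {e s : E} {a b : ℝ} (ha : 0 ≤ a) (hab : a ^ 2 + b ^ 2 = ‖e‖ ^ 2)
    (hs : s ∈ circularCone e a) : ‖e‖ ^ 2 * ‖s‖ ^ 2 - ⟪e, s⟫ ^ 2 ≤ (b * ‖s‖) ^ 2 := by
  have : (a * ‖s‖) ^ 2 ≤ ⟪e, s⟫ ^ 2 := pow_le_pow_left₀ (by positivity) hs 2
  rw [← hab]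
  linarith

/-- If `s` and `x` make angles at most `θ₁`, `θ₂` with `e`, where `cos θᵢ = aᵢ / ‖e‖` and
`sin θᵢ = bᵢ / ‖e‖`, then the angle between them is at most `θ₁ + θ₂`. -/
lemma mul_norm_mul_le_inner_of_mem_circularCone {e s x : E} {a₁ b₁ a₂ b₂ : ℝ} (ha₁ : 0 ≤ a₁)
    (hb₁ : 0 ≤ b₁) (ha₂ : 0 ≤ a₂) (hb₂ : 0 ≤ b₂) (h₁ : a₁ ^ 2 + b₁ ^ 2 = ‖e‖ ^ 2)
    (h₂ : a₂ ^ 2 + b₂ ^ 2 = ‖e‖ ^ 2) (hs : s ∈ circularCone e a₁) (hx : x ∈ circularCone e a₂) :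
    (a₁ * a₂ - b₁ * b₂) * (‖s‖ * ‖x‖) ≤ ‖e‖ ^ 2 * ⟪s, x⟫ := by
  have hx₀ : 0 ≤ ‖e‖ ^ 2 * ‖x‖ ^ 2 - ⟪e, x⟫ ^ 2 := by
    have := real_inner_mul_inner_self_le e x
    rw [real_inner_self_eq_norm_sq, real_inner_self_eq_norm_sq] at this
    nlinarith
  have hD : (‖e‖ ^ 2 * ⟪s, x⟫ - ⟪e, s⟫ * ⟪e, x⟫) ^ 2 ≤ (b₁ * ‖s‖ * (b₂ * ‖x‖)) ^ 2 :=
    (sq_mul_inner_sub_le e s x).trans <| mul_pow (b₁ * ‖s‖) _ 2 ▸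
      mul_le_mul (sq_norm_mul_sub_sq_inner_le ha₁ h₁ hs) (sq_norm_mul_sub_sq_inner_le ha₂ h₂ hx)
        hx₀ (sq_nonneg _)
  have hprod : a₁ * ‖s‖ * (a₂ * ‖x‖) ≤ ⟪e, s⟫ * ⟪e, x⟫ :=
    mul_le_mul hs hx (by positivity) ((by positivity : 0 ≤ a₁ * ‖s‖).trans hs)
  nlinarith [(abs_le_of_sq_le_sq' hD (by positivity)).1]

lemma sqrt_mul_sq_mul_div_le {A r c t : ℝ} (hA : 0 ≤ A) (hr : 0 ≤ r) (ht₀ : 0 ≤ t) (ht₁ : t ≤ 1) :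
    √(A * r ^ 2 * t / (A + c ^ 2 * t)) ≤ r := by
  refine (Real.sqrt_le_sqrt (div_le_of_le_mul₀ (by positivity) (sq_nonneg r) ?_)).trans_eq
    (Real.sqrt_sq hr)
  nlinarith [mul_nonneg (mul_nonneg hA (sq_nonneg r)) (sub_nonneg.mpr ht₁),
    mul_nonneg (mul_nonneg (sq_nonneg r) (sq_nonneg c)) ht₀]

end

theorem stmt_18_general (n : ℕ) (e : EuclideanSpace ℝ (Fin n))
    (he : ‖e‖ = Real.sqrt n) (α β : ℝ)
    (hβ0 : 0 < β) (hβα : β ≤ α) (hαn : α < Real.sqrt n)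
    (L : Submodule ℝ (EuclideanSpace ℝ (Fin n))) (heL : e ∉ L)
    (sbar : EuclideanSpace ℝ (Fin n))
    (hsint : sbar ∈ interior {s : EuclideanSpace ℝ (Fin n) |
      (inner ℝ e s : ℝ) ≥ Real.sqrt ((n : ℝ) - β ^ 2) * ‖s‖})
    (xbar : EuclideanSpace ℝ (Fin n))
    (hxfeas : xbar - e ∈ L ∧ (inner ℝ e xbar : ℝ) ≥ α * ‖xbar‖)
    (hxopt : ∀ x : EuclideanSpace ℝ (Fin n),
      x - e ∈ L → (inner ℝ e x : ℝ) ≥ α * ‖x‖ →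
      (inner ℝ sbar xbar : ℝ) ≤ (inner ℝ sbar x : ℝ)) :
    ∃ sbar' : EuclideanSpace ℝ (Fin n),
      sbar' - sbar ∈ Lᗮ ∧
      (inner ℝ e sbar' : ℝ) ≥ Real.sqrt ((n : ℝ) - α ^ 2) * ‖sbar'‖ ∧
      (inner ℝ e (sbar - sbar') : ℝ) ≥
        Real.sqrt (((n : ℝ) - α ^ 2) * ‖xbar‖ ^ 2 * (1 - (β / α) ^ 2) /
            ((n : ℝ) - α ^ 2 + (‖xbar‖ - α) ^ 2 * (1 - (β / α) ^ 2))) *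
          ((1 / (n : ℝ)) * (α * Real.sqrt ((n : ℝ) - β ^ 2)
            - β * Real.sqrt ((n : ℝ) - α ^ 2))) * ‖sbar‖ := by
  have hα : 0 < α := hβ0.trans_le hβα
  have hne : ‖e‖ ^ 2 = n := by rw [he, Real.sq_sqrt (Nat.cast_nonneg n)]
  have hn : (0 : ℝ) < n := Real.sqrt_pos.mp (hα.trans hαn)
  have hα₂ : α ^ 2 < n := hne ▸ pow_lt_pow_left₀ (he ▸ hαn) hα.le two_ne_zero
  have hβ₂ : β ^ 2 ≤ α ^ 2 := pow_le_pow_left₀ hβ0.le hβα 2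
  have hxbar : xbar ≠ 0 := by
    rintro rfl
    exact heL (by simpa using L.neg_mem hxfeas.1)
  obtain ⟨sbar', hsbar'L, hsbar'C, hslack⟩ :=
    exists_dual_certificate hα (he ▸ hαn) hxbar hxfeas.1 hxfeas.2 hxopt
  rw [hne] at hsbar'C
  refine ⟨sbar', hsbar'L, hsbar'C, ?_⟩
  have hangle := mul_norm_mul_le_inner_of_mem_circularCone (a₁ := √(n - β ^ 2)) (b₁ := β)
    (a₂ := α) (b₂ := √(n - α ^ 2)) (Real.sqrt_nonneg _) hβ0.le hα.le (Real.sqrt_nonneg _)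
    (by rw [Real.sq_sqrt (by linarith), hne]; ring) (by rw [Real.sq_sqrt (by linarith), hne]; ring)
    (interior_subset hsint) hxfeas.2
  rw [hne] at hangle
  have hC₂ : 0 ≤ α * √(n - β ^ 2) - β * √(n - α ^ 2) :=
    sub_nonneg.mpr (mul_le_mul hβα (Real.sqrt_le_sqrt (by linarith)) (Real.sqrt_nonneg _) hα.le)
  have hC₁ := sqrt_mul_sq_mul_div_le (A := n - α ^ 2) (r := ‖xbar‖) (c := ‖xbar‖ - α)
    (t := 1 - (β / α) ^ 2) (by linarith) (norm_nonneg _)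
    (sub_nonneg.mpr (by rw [div_pow]; exact div_le_one_of_le₀ hβ₂ (sq_nonneg α)))
    (by linarith [sq_nonneg (β / α)])
  rw [ge_iff_le, inner_sub_eq_inner_of_mem_orthogonal hxfeas.1 hsbar'L hslack]
  calc _ ≤ ‖xbar‖ * ((1 / (n : ℝ)) * (α * √(n - β ^ 2) - β * √(n - α ^ 2))) * ‖sbar‖ := by gcongr
    _ = (1 / (n : ℝ)) * ((√(n - β ^ 2) * α - β * √(n - α ^ 2)) * (‖sbar‖ * ‖xbar‖)) := by ring
    _ ≤ (1 / (n : ℝ)) * (n * ⟪sbar, xbar⟫) := by gcongr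
    _ = ⟪sbar, xbar⟫ := by field_simp

theorem stmt_18 (n : ℕ) (e : EuclideanSpace ℝ (Fin n))
    (he : ‖e‖ = Real.sqrt n) (α β : ℝ)
    (hβ0 : 0 < β) (hβα : β ≤ α) (hαn : α < Real.sqrt n)
    (L : Submodule ℝ (EuclideanSpace ℝ (Fin n))) (heL : e ∉ L)
    (sbar : EuclideanSpace ℝ (Fin n))
    (hsint : sbar ∈ interior {s : EuclideanSpace ℝ (Fin n) |
      (inner ℝ e s : ℝ) ≥ Real.sqrt ((n : ℝ) - β ^ 2) * ‖s‖})
    (hsL : sbar ∉ Lᗮ)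
    (xbar : EuclideanSpace ℝ (Fin n))
    (hxfeas : xbar - e ∈ L ∧ (inner ℝ e xbar : ℝ) ≥ α * ‖xbar‖)
    (hxopt : ∀ x : EuclideanSpace ℝ (Fin n),
      x - e ∈ L → (inner ℝ e x : ℝ) ≥ α * ‖x‖ →
      (inner ℝ sbar xbar : ℝ) ≤ (inner ℝ sbar x : ℝ)) :
    ∃ sbar' : EuclideanSpace ℝ (Fin n),
      sbar' - sbar ∈ Lᗮ ∧
      (inner ℝ e sbar' : ℝ) ≥ Real.sqrt ((n : ℝ) - α ^ 2) * ‖sbar'‖ ∧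
      (inner ℝ e (sbar - sbar') : ℝ) ≥
        Real.sqrt (((n : ℝ) - α ^ 2) * ‖xbar‖ ^ 2 * (1 - (β / α) ^ 2) /
            ((n : ℝ) - α ^ 2 + (‖xbar‖ - α) ^ 2 * (1 - (β / α) ^ 2))) *
          ((1 / (n : ℝ)) * (α * Real.sqrt ((n : ℝ) - β ^ 2)
            - β * Real.sqrt ((n : ℝ) - α ^ 2))) * ‖sbar‖ :=
  stmt_18_general n e he α β hβ0 hβα hαn L heL sbar hsint xbar hxfeas hxopt
end
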